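/- arXiv:2506.04690 — 2 statements merged into one kernel-verified Lean document; each statement's English description precedes it below -/
import Mathlib

section
/- Let p, q be positive integers, let h : ℝ^p → ℝ^q be continuously differentiable with component functions h_1, …, h_q, and suppose that for each r ∈ {1,…,q} the quantity b_r := sup_{x ∈ ℝ^p} ‖∇_x h_r(x)‖₂ is finite. Fix constants c ∈ (0,1) and C > 0, and define B_r := { x ∈ ℝ^p : ‖∇_x h_r(x)‖₂ > c · b_r }. If the Lebesgue measure of the union ⋃_{r=1}^q B_r is at most C, then for every ε > 0 there exists a Borel probability measure 𝒫 on ℝ^p (which can be taken to be the uniform distribution on a Euclidean ball of sufficiently large Lebesgue measure) such that for every x ∈ ℝ^p and every r ∈ {1,…,q}, ‖𝔼_{η ∼ 𝒫}[∇_x h_r(x + η)]‖₂ ≤ (c + ε) · b_r. -/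
open MeasureTheory Metric Set

/-- **Theorem 1 (Lipschitz reduction).** If each component `h r` of a `C¹` map
`h : ℝ^p → ℝ^q` has gradient with finite sup-norm `b r`, and the set where the gradient
norm exceeds `c * b r` (over all `r`) has Lebesgue measure at most `C`, then for every
`ε > 0` there is a Borel probability measure `P` on `ℝ^p` such that for every `x` and `r`,
the norm of the averaged gradient `𝔼_{η ∼ P}[∇ h_r (x + η)]` is at most `(c + ε) * b r`. -/
theorem dipnet_lipschitz_reduction
    (p q : ℕ) (hp : 0 < p) (hq : 0 < q)
    (h : Fin q → EuclideanSpace ℝ (Fin p) → ℝ)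
    (hsmooth : ∀ r, ContDiff ℝ 1 (h r))
    (b : Fin q → ℝ)
    (hbdd : ∀ r, BddAbove (Set.range fun x => ‖gradient (h r) x‖))
    (hb : ∀ r, b r = ⨆ x, ‖gradient (h r) x‖)
    (c C : ℝ) (hc0 : 0 < c) (hc1 : c < 1) (hC : 0 < C)
    (B : Fin q → Set (EuclideanSpace ℝ (Fin p)))
    (hB : ∀ r, B r = {x | ‖gradient (h r) x‖ > c * b r})
    (hmeas : volume (⋃ r, B r) ≤ ENNReal.ofReal C)
    (ε : ℝ) (hε : 0 < ε) :
    ∃ P : Measure (EuclideanSpace ℝ (Fin p)), IsProbabilityMeasure P ∧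
      ∀ x : EuclideanSpace ℝ (Fin p), ∀ r : Fin q,
        ‖∫ η, gradient (h r) (x + η) ∂P‖ ≤ (c + ε) * b r := by
  classical
  haveI : Nonempty (Fin p) := ⟨⟨0, hp⟩⟩
  -- choose a large ball
  obtain ⟨R, hR⟩ : ∃ R : ℕ,
      ENNReal.ofReal (C/ε) ≤ volume (closedBall (0 : EuclideanSpace ℝ (Fin p)) R) := by
    have huniv : volume (univ : Set (EuclideanSpace ℝ (Fin p))) = ⊤ :=
      measure_univ_of_isAddLeftInvariant volume
    have hmono : Monotone (fun n : ℕ => closedBall (0 : EuclideanSpace ℝ (Fin p)) n) := by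
      intro m n hmn
      exact closedBall_subset_closedBall (by exact_mod_cast hmn)
    have ht := tendsto_measure_iUnion_atTop (μ := volume) hmono
    rw [iUnion_closedBall_nat, huniv] at ht
    obtain ⟨n, hn⟩ := (ht.eventually (eventually_gt_nhds
      (show ENNReal.ofReal (C/ε) < ⊤ from ENNReal.ofReal_lt_top))).exists
    exact ⟨n, hn.le⟩
  set S : Set (EuclideanSpace ℝ (Fin p)) := closedBall 0 R with hS
  set V : ENNReal := volume S with hV
  have hVtop : V ≠ ⊤ := (measure_closedBall_lt_top).ne
  have hV0 : V ≠ 0 :=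
    (lt_of_lt_of_le (ENNReal.ofReal_pos.2 (div_pos hC hε)) hR).ne'
  have hVr : C / ε ≤ V.toReal := (ENNReal.ofReal_le_iff_le_toReal hVtop).1 hR
  have hVpos : 0 < V.toReal := lt_of_lt_of_le (div_pos hC hε) hVr
  refine ⟨V⁻¹ • volume.restrict S, ?_, ?_⟩
  · constructor
    rw [Measure.smul_apply, Measure.restrict_apply MeasurableSet.univ, univ_inter, smul_eq_mul,
      ← hV, ENNReal.inv_mul_cancel hV0 hVtop]
  intro x r
  set g := gradient (h r) with hg
  have hgcont : Continuous g := by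
    have hf : Continuous (fderiv ℝ (h r)) := (hsmooth r).continuous_fderiv one_ne_zero
    exact (InnerProductSpace.toDual ℝ (EuclideanSpace ℝ (Fin p))).symm.continuous.comp hf
  have hub : ∀ y, ‖g y‖ ≤ b r := by
    intro y
    rw [hb r]
    exact le_ciSup (hbdd r) y
  have hb0 : (0:ℝ) ≤ b r := le_trans (norm_nonneg _) (hub 0)
  set T : Set (EuclideanSpace ℝ (Fin p)) := {η | x + η ∈ B r} with hT
  have hTmeas : MeasurableSet T := by
    have : IsOpen (B r) := by
      rw [hB r]
      exact isOpen_lt continuous_const (continuous_norm.comp hgcont)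
    exact ((this.preimage (continuous_const.add continuous_id)).measurableSet)
  have hf : Continuous (fun η => g (x + η)) :=
    hgcont.comp (continuous_const.add continuous_id)
  have hint : IntegrableOn (fun η => g (x + η)) S volume :=
    hf.continuousOn.integrableOn_compact (isCompact_closedBall _ _)
  -- measure of bad part
  have hTvol : volume (S ∩ T) ≤ ENNReal.ofReal C := by
    refine le_trans (measure_mono inter_subset_right) ?_
    have : T = (fun η => x + η) ⁻¹' (B r) := rfl
    rw [this, measure_preimage_add]
    exact le_trans (measure_mono (subset_iUnion B r)) hmeas
  have hTvolR : (volume (S ∩ T)).toReal ≤ C := by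
    refine ENNReal.toReal_le_of_le_ofReal hC.le hTvol
  have hSdiff : (volume (S \ T)).toReal ≤ V.toReal := by
    refine ENNReal.toReal_mono hVtop (measure_mono diff_subset)
  -- split the integral
  have hsplit : (∫ η in S ∩ T, g (x + η)) + (∫ η in S \ T, g (x + η))
      = ∫ η in S, g (x + η) := integral_inter_add_diff hTmeas hint
  have h1 : ‖∫ η in S ∩ T, g (x + η)‖ ≤ b r * (volume (S ∩ T)).toReal := by
    refine norm_setIntegral_le_of_norm_le_const ?_ (fun y _ => hub _)
    · exact lt_of_le_of_lt (measure_mono inter_subset_left) measure_closedBall_lt_top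
  have h2 : ‖∫ η in S \ T, g (x + η)‖ ≤ (c * b r) * (volume (S \ T)).toReal := by
    refine norm_setIntegral_le_of_norm_le_const ?_ (fun y hy => ?_)
    · exact lt_of_le_of_lt (measure_mono diff_subset) measure_closedBall_lt_top
    · have : x + y ∉ B r := hy.2
      rw [hB r] at this
      simpa using not_lt.mp this
  have hSbound : ‖∫ η in S, g (x + η)‖ ≤ b r * C + c * b r * V.toReal := by
    rw [← hsplit]
    calc ‖(∫ η in S ∩ T, g (x + η)) + (∫ η in S \ T, g (x + η))‖
        ≤ ‖∫ η in S ∩ T, g (x + η)‖ + ‖∫ η in S \ T, g (x + η)‖ := norm_add_le _ _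
      _ ≤ b r * (volume (S ∩ T)).toReal + (c * b r) * (volume (S \ T)).toReal := add_le_add h1 h2
      _ ≤ b r * C + c * b r * V.toReal :=
          add_le_add (mul_le_mul_of_nonneg_left hTvolR hb0)
            (mul_le_mul_of_nonneg_left hSdiff (mul_nonneg hc0.le hb0))
  -- now the averaged integral
  have hPint : (∫ η, g (x + η) ∂(V⁻¹ • volume.restrict S))
      = (V⁻¹).toReal • ∫ η in S, g (x + η) := integral_smul_measure _ _
  rw [hPint]
  rw [norm_smul, ENNReal.toReal_inv]
  have : ‖(V.toReal)⁻¹‖ = (V.toReal)⁻¹ := by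
    rw [Real.norm_eq_abs, abs_of_nonneg (inv_nonneg.2 hVpos.le)]
  rw [this]
  have hCε : C ≤ ε * V.toReal := by
    rw [div_le_iff₀ hε] at hVr
    linarith [hVr]
  calc (V.toReal)⁻¹ * ‖∫ η in S, g (x + η)‖
      ≤ (V.toReal)⁻¹ * (b r * C + c * b r * V.toReal) :=
        mul_le_mul_of_nonneg_left hSbound (inv_nonneg.2 hVpos.le)
    _ ≤ (c + ε) * b r := by
        rw [inv_mul_le_iff₀ hVpos]
        ring_nf
        nlinarith [mul_le_mul_of_nonneg_left hCε hb0]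
end

section
/- Let p, q be positive integers, let h : ℝ^p → ℝ^q be twice continuously differentiable with component functions h_1, …, h_q, and suppose that for each r ∈ {1,…,q} the quantity s_r := sup_{x ∈ ℝ^p} ‖∇²_x h_r(x)‖₂ is finite, where ‖∇²_x h_r(x)‖₂ denotes the operator (spectral) norm of the Hessian matrix of h_r at x. Fix constants c ∈ (0,1) and C > 0, and define S_r := { x ∈ ℝ^p : ‖∇²_x h_r(x)‖₂ > c · s_r }. If the Lebesgue measure of the union ⋃_{r=1}^q S_r is at most C, then for every ε > 0 there exists a Borel probability measure 𝒫 on ℝ^p (which can be taken to be the uniform distribution on a Euclidean ball of sufficiently large Lebesgue measure) such that for every x ∈ ℝ^p and every r ∈ {1,…,q}, ‖𝔼_{η ∼ 𝒫}[∇²_x h_r(x + η)]‖₂ ≤ (c + ε) · s_r. -/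
open MeasureTheory

/-- **Theorem 2 (smoothness reduction).** If each component `h r` of a `C²` map
`h : ℝ^p → ℝ^q` has Hessian (second derivative, viewed as a continuous bilinear form,
whose norm is the spectral norm of the Hessian matrix) with finite sup-norm `s r`, and
the set where the Hessian norm exceeds `c * s r` (over all `r`) has Lebesgue measure at
most `C`, then for every `ε > 0` there is a Borel probability measure `P` on `ℝ^p` such
that for every `x` and `r`, the norm of the averaged Hessian
`𝔼_{η ∼ P}[∇² h_r (x + η)]` is at most `(c + ε) * s r`. -/
theorem dipnet_smoothness_reduction
    (p q : ℕ) (hp : 0 < p) (hq : 0 < q)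
    (h : Fin q → EuclideanSpace ℝ (Fin p) → ℝ)
    (hsmooth : ∀ r, ContDiff ℝ 2 (h r))
    (s : Fin q → ℝ)
    (hbdd : ∀ r, BddAbove (Set.range fun x => ‖iteratedFDeriv ℝ 2 (h r) x‖))
    (hs : ∀ r, s r = ⨆ x, ‖iteratedFDeriv ℝ 2 (h r) x‖)
    (c C : ℝ) (hc0 : 0 < c) (hc1 : c < 1) (hC : 0 < C)
    (S : Fin q → Set (EuclideanSpace ℝ (Fin p)))
    (hS : ∀ r, S r = {x | ‖iteratedFDeriv ℝ 2 (h r) x‖ > c * s r})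
    (hmeas : volume (⋃ r, S r) ≤ ENNReal.ofReal C)
    (ε : ℝ) (hε : 0 < ε) :
    ∃ P : Measure (EuclideanSpace ℝ (Fin p)), IsProbabilityMeasure P ∧
      ∀ x : EuclideanSpace ℝ (Fin p), ∀ r : Fin q,
        ‖∫ η, iteratedFDeriv ℝ 2 (h r) (x + η) ∂P‖ ≤ (c + ε) * s r := by
  classical
  let E := EuclideanSpace ℝ (Fin p)
  haveI : Nonempty (Fin p) := ⟨⟨0, hp⟩⟩
  haveI : Nontrivial E := by
    refine ⟨0, EuclideanSpace.single ⟨0, hp⟩ (1 : ℝ), fun h0 => ?_⟩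
    have : ‖(0 : E)‖ = ‖EuclideanSpace.single (⟨0, hp⟩ : Fin p) (1 : ℝ)‖ := by rw [h0]
    simp [EuclideanSpace.norm_single] at this
  -- C/ε is positive
  have hCε : 0 < C / ε := div_pos hC hε
  -- find a ball with volume larger than C/ε
  obtain ⟨n, hn⟩ : ∃ n : ℕ, ENNReal.ofReal (C / ε) < volume (Metric.ball (0 : E) n) := by
    by_contra hcon
    push_neg at hcon
    have hdir : Directed (· ⊆ ·) (fun n : ℕ => Metric.ball (0 : E) n) := by
      intro a b
      exact ⟨max a b, Metric.ball_subset_ball (by exact_mod_cast le_max_left a b),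
        Metric.ball_subset_ball (by exact_mod_cast le_max_right a b)⟩
    have huniv : volume (Set.univ : Set E) = ⨆ n : ℕ, volume (Metric.ball (0 : E) n) := by
      rw [← Metric.iUnion_ball_nat (0 : E), hdir.measure_iUnion]
    have htop : volume (Set.univ : Set E) = ⊤ := measure_univ_of_isAddLeftInvariant volume
    have : (⊤ : ENNReal) ≤ ENNReal.ofReal (C / ε) := by
      rw [← htop, huniv]
      exact iSup_le hcon
    exact (ENNReal.ofReal_lt_top.trans_le this).false
  set B : Set E := Metric.ball (0 : E) n with hB
  set V : ENNReal := volume B with hV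
  have hVtop : V ≠ ⊤ := measure_ball_lt_top.ne
  have hvpos : C / ε < V.toReal := by
    rwa [← ENNReal.ofReal_lt_iff_lt_toReal hCε.le hVtop]
  have hv0 : 0 < V.toReal := hCε.trans hvpos
  have hV0 : V ≠ 0 := by
    intro h0
    rw [h0] at hvpos
    simp at hvpos
    exact absurd hvpos (not_lt.mpr hCε.le)
  refine ⟨V⁻¹ • volume.restrict B, ?_, ?_⟩
  · constructor
    simp only [Measure.smul_apply, Measure.restrict_apply MeasurableSet.univ, Set.univ_inter,
      smul_eq_mul]
    exact ENNReal.inv_mul_cancel hV0 hVtop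
  intro x r
  -- basic facts about s r and the Hessian
  have hsle : ∀ y : E, ‖iteratedFDeriv ℝ 2 (h r) y‖ ≤ s r := by
    intro y
    rw [hs r]
    exact le_ciSup (hbdd r) y
  have hsr0 : 0 ≤ s r := (norm_nonneg _).trans (hsle 0)
  set f : E → (E [×2]→L[ℝ] ℝ) := fun η => iteratedFDeriv ℝ 2 (h r) (x + η) with hf_def
  have hfc : Continuous f := by
    have h1 : Continuous (iteratedFDeriv ℝ 2 (h r)) :=
      (hsmooth r).continuous_iteratedFDeriv (by norm_cast)
    exact h1.comp (continuous_const.add continuous_id)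
  have hfle : ∀ η, ‖f η‖ ≤ s r := fun η => hsle (x + η)
  -- the bad set
  set A : Set E := {η : E | c * s r < ‖f η‖} with hA_def
  have hAopen : IsOpen A := isOpen_lt continuous_const hfc.norm
  have hA_vol : volume A ≤ ENNReal.ofReal C := by
    have hAeq : A = (fun η : E => x + η) ⁻¹' (S r) := by
      ext η
      simp [hA_def, hS r, Set.mem_preimage, f]
    rw [hAeq, measure_preimage_add]
    exact le_trans (measure_mono (Set.subset_iUnion S r)) hmeas
  -- integrability
  have hfi : IntegrableOn (fun η => ‖f η‖) B volume := by
    refine Measure.integrableOn_of_bounded (M := s r) measure_ball_lt_top.ne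
      hfc.norm.aestronglyMeasurable ?_
    filter_upwards with η using by simpa [abs_of_nonneg (norm_nonneg _)] using hfle η
  -- split the set integral
  have hsplit : ∫ η in B, ‖f η‖ = (∫ η in B ∩ A, ‖f η‖) + ∫ η in B \ A, ‖f η‖ := by
    rw [← setIntegral_union (Disjoint.mono_left Set.inter_subset_right Set.disjoint_sdiff_right)
      (hB ▸ (Metric.isOpen_ball.measurableSet.diff hAopen.measurableSet))
      (hfi.mono_set Set.inter_subset_left) (hfi.mono_set Set.diff_subset),
      Set.inter_union_diff]
  have hBA_vol : (volume (B ∩ A)).toReal ≤ C := by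
    have h1 : volume (B ∩ A) ≤ ENNReal.ofReal C :=
      le_trans (measure_mono Set.inter_subset_right) hA_vol
    calc (volume (B ∩ A)).toReal ≤ (ENNReal.ofReal C).toReal :=
          ENNReal.toReal_mono ENNReal.ofReal_ne_top h1
      _ = C := ENNReal.toReal_ofReal hC.le
  have hbound1 : ∫ η in B ∩ A, ‖f η‖ ≤ s r * C := by
    have := norm_setIntegral_le_of_norm_le_const
      (μ := volume) (s := B ∩ A) (C := s r) (f := fun η => ‖f η‖)
      ((measure_mono Set.inter_subset_left).trans_lt measure_ball_lt_top)
      (fun η _ => by simpa [abs_of_nonneg (norm_nonneg _)] using hfle η)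
    calc ∫ η in B ∩ A, ‖f η‖ ≤ ‖∫ η in B ∩ A, ‖f η‖‖ := le_abs_self _
      _ ≤ s r * (volume (B ∩ A)).toReal := this
      _ ≤ s r * C := mul_le_mul_of_nonneg_left hBA_vol hsr0
  have hbound2 : ∫ η in B \ A, ‖f η‖ ≤ c * s r * V.toReal := by
    have := norm_setIntegral_le_of_norm_le_const
      (μ := volume) (s := B \ A) (C := c * s r) (f := fun η => ‖f η‖)
      ((measure_mono Set.diff_subset).trans_lt measure_ball_lt_top)
      (fun η hη => by
        have : ¬ (c * s r < ‖f η‖) := hη.2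
        simpa [abs_of_nonneg (norm_nonneg _)] using not_lt.mp this)
    calc ∫ η in B \ A, ‖f η‖ ≤ ‖∫ η in B \ A, ‖f η‖‖ := le_abs_self _
      _ ≤ c * s r * (volume (B \ A)).toReal := this
      _ ≤ c * s r * V.toReal := by
          refine mul_le_mul_of_nonneg_left ?_ (mul_nonneg hc0.le hsr0)
          exact ENNReal.toReal_mono hVtop (measure_mono Set.diff_subset)
  -- assemble
  have hmain : ‖∫ η, f η ∂(V⁻¹ • volume.restrict B)‖
      ≤ (V.toReal)⁻¹ * (s r * C + c * s r * V.toReal) := by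
    calc ‖∫ η, f η ∂(V⁻¹ • volume.restrict B)‖
        ≤ ∫ η, ‖f η‖ ∂(V⁻¹ • volume.restrict B) := norm_integral_le_integral_norm _
      _ = (V⁻¹).toReal * ∫ η in B, ‖f η‖ := by
          rw [integral_smul_measure]; rfl
      _ = (V.toReal)⁻¹ * ∫ η in B, ‖f η‖ := by rw [ENNReal.toReal_inv]
      _ ≤ (V.toReal)⁻¹ * (s r * C + c * s r * V.toReal) := by
          refine mul_le_mul_of_nonneg_left ?_ (inv_nonneg.mpr hv0.le)
          rw [hsplit]
          exact add_le_add hbound1 hbound2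
  refine hmain.trans ?_
  have hCv : C / V.toReal ≤ ε := by
    rw [div_le_iff₀ hv0]
    have : C < ε * V.toReal := by
      have := (div_lt_iff₀ hε).mp hvpos
      linarith [this]
    linarith
  have : (V.toReal)⁻¹ * (s r * C + c * s r * V.toReal)
      = s r * (C / V.toReal) + c * s r := by
    field_simp
  rw [this]
  have : s r * (C / V.toReal) ≤ s r * ε :=
    mul_le_mul_of_nonneg_left hCv hsr0
  nlinarith [this]
end
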